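/- arXiv:2105.12616 — 2 statements merged into one kernel-verified Lean document; each statement's English description precedes it below -/
import Mathlib

section
/- Suppose e = 2 (i.e. t = s) and 2n ≡ 1 (mod 3), and set i_max = (2n−1)/3. Then δ(i_max − 1) = δ(i_max); moreover δ is strictly increasing on {0, 1, …, i_max − 1} and strictly decreasing on {i_max, …, n−1}, so δ attains its maximum value at i_max as well as at i_max − 1. -/
open Finset

/-- `t = s^(e/2)` as a real number. -/
noncomputable def tval (s e : ℕ) : ℝ := (s : ℝ) ^ ((e : ℝ) / 2)

/-- `δ(i) = |Δ_i|`, the number of `i`-dimensional singular subspaces of a finite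
polar space of rank `n` with orders `(s, …, s, t)`, `t = s^(e/2)`. -/
noncomputable def delta (n s e : ℕ) (i : ℤ) : ℝ :=
  (∏ u ∈ Finset.Icc (0:ℤ) i, ((s:ℝ) ^ ((n:ℤ) - u - 1) * tval s e + 1)) *
  (∏ u ∈ Finset.Icc (0:ℤ) i, ((s:ℝ) ^ ((n:ℤ) - u) - 1)) /
  (∏ u ∈ Finset.Icc (0:ℤ) i, ((s:ℝ) ^ (u + 1) - 1))

/-! For `t = s` two consecutive factors of `δ` combine, `(s^(m-1)·s + 1)(s^m - 1) = s^(2m) - 1`,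
so `δ(i+1) = δ(i) · (s^(2(n-i-1)) - 1) / (s^(i+2) - 1)`. Since `s > 1` this ratio exceeds `1`
exactly when `i + 2 < 2(n-i-1)`, i.e. `3i < 2n - 4`, and it equals `1` exactly when
`3(i+1) = 2n - 1`. Hence `δ` climbs up to `i_max - 1`, stays level for one step and then falls. -/

lemma tval_two (s : ℕ) : tval s 2 = s := by
  simp [tval]

lemma delta_pos {n s e : ℕ} (hs : 1 < s) {i : ℤ} (hi : i ≤ (n:ℤ) - 1) :
    0 < delta n s e i := by
  have hs' : (1:ℝ) < s := by exact_mod_cast hs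
  unfold delta tval
  refine div_pos (mul_pos (prod_pos fun u _ => by positivity) (prod_pos fun u hu => ?_))
    (prod_pos fun u hu => ?_) <;>
  · rw [mem_Icc] at hu
    exact sub_pos.2 (one_lt_zpow₀ hs' (by omega))

lemma delta_add_one (n s e : ℕ) {i : ℤ} (hi : -1 ≤ i) :
    delta n s e (i + 1) = delta n s e i *
      (((s:ℝ) ^ ((n:ℤ) - (i + 1) - 1) * tval s e + 1) * ((s:ℝ) ^ ((n:ℤ) - (i + 1)) - 1) /
        ((s:ℝ) ^ (i + 1 + 1) - 1)) := by
  have hnot : i + 1 ∉ Icc (0:ℤ) i := by simp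
  unfold delta
  rw [← insert_Icc_right_eq_Icc_add_one (by omega), prod_insert hnot, prod_insert hnot,
    prod_insert hnot, mul_mul_mul_comm, mul_div_mul_comm, mul_comm]

lemma zpow_sub_one_mul_add_one_mul_zpow_sub_one {x : ℝ} (hx : x ≠ 0) (m : ℤ) :
    (x ^ (m - 1) * x + 1) * (x ^ m - 1) = x ^ (2 * m) - 1 := by
  rw [← zpow_add_one₀ hx, sub_add_cancel, two_mul, zpow_add₀ hx]
  ring

lemma delta_two_add_one (n : ℕ) {s : ℕ} (hs : s ≠ 0) {i : ℤ} (hi : -1 ≤ i) :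
    delta n s 2 (i + 1) = delta n s 2 i *
      (((s:ℝ) ^ (2 * ((n:ℤ) - i - 1)) - 1) / ((s:ℝ) ^ (i + 2) - 1)) := by
  rw [delta_add_one n s 2 hi, tval_two,
    zpow_sub_one_mul_add_one_mul_zpow_sub_one (Nat.cast_ne_zero.2 hs)]
  ring_nf

lemma one_lt_zpow_sub_one_div_zpow_sub_one {x : ℝ} (hx : 1 < x) {a b : ℤ} (hb : 0 < b)
    (hba : b < a) : 1 < (x ^ a - 1) / (x ^ b - 1) :=
  (one_lt_div (sub_pos.2 (one_lt_zpow₀ hx hb))).2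
    (sub_lt_sub_right (zpow_lt_zpow_right₀ hx hba) 1)

lemma zpow_sub_one_div_zpow_sub_one_lt_one {x : ℝ} (hx : 1 < x) {a b : ℤ} (hb : 0 < b)
    (hab : a < b) : (x ^ a - 1) / (x ^ b - 1) < 1 :=
  (div_lt_one (sub_pos.2 (one_lt_zpow₀ hx hb))).2
    (sub_lt_sub_right (zpow_lt_zpow_right₀ hx hab) 1)

theorem stmt_1_general (n s e : ℕ) (hs : 2 ≤ s) (he : e = 2)
    (hmod : (2 * (n:ℤ)) % 3 = 1)
    (imax : ℤ) (himax : imax = (2 * (n:ℤ) - 1) / 3) :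
    delta n s e (imax - 1) = delta n s e imax ∧
    StrictMonoOn (delta n s e) (Set.Icc 0 (imax - 1)) ∧
    StrictAntiOn (delta n s e) (Set.Icc imax ((n:ℤ) - 1)) ∧
    ∀ i ∈ Set.Icc (0:ℤ) ((n:ℤ) - 1), delta n s e i ≤ delta n s e imax := by
  subst he
  have hs' : (1:ℝ) < s := by exact_mod_cast hs
  have h3imax : 3 * imax = 2 * (n:ℤ) - 1 := by omega
  have hs0 : s ≠ 0 := by omega
  have hlevel : delta n s 2 (imax - 1) = delta n s 2 imax := by
    have h := delta_two_add_one n hs0 (by omega : -1 ≤ imax - 1)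
    rwa [sub_add_cancel, show 2 * ((n:ℤ) - (imax - 1) - 1) = imax - 1 + 2 by omega,
      div_self (sub_pos.2 (one_lt_zpow₀ hs' (by omega))).ne', mul_one, eq_comm] at h
  have hmono : StrictMonoOn (delta n s 2) (Set.Icc 0 (imax - 1)) :=
    strictMonoOn_of_lt_add_one Set.ordConnected_Icc fun a _ ⟨ha, _⟩ ⟨_, ha'⟩ => by
      rw [delta_two_add_one n hs0 (by omega : -1 ≤ a)]
      exact (lt_mul_iff_one_lt_right (delta_pos hs (by omega))).2
        (one_lt_zpow_sub_one_div_zpow_sub_one hs' (by omega) (by omega))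
  have hanti : StrictAntiOn (delta n s 2) (Set.Icc imax ((n:ℤ) - 1)) :=
    strictAntiOn_of_add_one_lt Set.ordConnected_Icc fun a _ ⟨ha, _⟩ ⟨_, ha'⟩ => by
      rw [delta_two_add_one n hs0 (by omega : -1 ≤ a)]
      exact (mul_lt_iff_lt_one_right (delta_pos hs (by omega))).2
        (zpow_sub_one_div_zpow_sub_one_lt_one hs' (by omega) (by omega))
  refine ⟨hlevel, hmono, hanti, fun i hi => ?_⟩
  rcases le_or_gt imax i with h | h
  · exact hanti.antitoneOn ⟨le_rfl, by omega⟩ ⟨h, hi.2⟩ h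
  · rw [← hlevel]
    exact hmono.monotoneOn ⟨hi.1, by omega⟩ ⟨by omega, le_rfl⟩ (by omega)

theorem stmt_1 (n s e : ℕ) (hn : 3 ≤ n) (hs : 2 ≤ s) (he : e = 2)
    (hmod : (2 * (n:ℤ)) % 3 = 1)
    (imax : ℤ) (himax : imax = (2 * (n:ℤ) - 1) / 3) :
    delta n s e (imax - 1) = delta n s e imax ∧
    StrictMonoOn (delta n s e) (Set.Icc 0 (imax - 1)) ∧
    StrictAntiOn (delta n s e) (Set.Icc imax ((n:ℤ) - 1)) ∧
    ∀ i ∈ Set.Icc (0:ℤ) ((n:ℤ) - 1), delta n s e i ≤ delta n s e imax :=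
  stmt_1_general n s e hs he hmod imax himax
end

section
/- Let i, j be integers with (n−2)/2 ≤ i < j ≤ n−1. Then κ(i) > κ(j). -/
open Finset

/-- `F(i,k) = ∏_{u=n−2i+k−1}^{n−i−2} (s^u·t + 1)`. -/
noncomputable def F (n s e : ℕ) (i k : ℤ) : ℝ :=
  ∏ u ∈ Finset.Icc ((n:ℤ) - 2*i + k - 1) ((n:ℤ) - i - 2), ((s:ℝ) ^ u * tval s e + 1)

/-- `G(i,k) = s^{(i−k)²} · ∏_{v=1}^{k+1} (s^{i−k+v}−1)/(s^v−1)
  · ∏_{v=1}^{i−k} (s^{n−2i+k−1+v}−1)/(s^v−1)`. -/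
noncomputable def G (n s : ℕ) (i k : ℤ) : ℝ :=
  (s:ℝ) ^ ((i - k)^2) *
  (∏ v ∈ Finset.Icc (1:ℤ) (k + 1), ((s:ℝ) ^ (i - k + v) - 1) / ((s:ℝ) ^ v - 1)) *
  (∏ v ∈ Finset.Icc (1:ℤ) (i - k), ((s:ℝ) ^ ((n:ℤ) - 2*i + k - 1 + v) - 1) / ((s:ℝ) ^ v - 1))

/-- `κ(i) = Σ_{k = max(2i−n+1,−1)}^{i−1} F(i,k)·G(i,k)`, the degree of `(Δ_i, ⊥)`. -/
noncomputable def kappa (n s e : ℕ) (i : ℤ) : ℝ :=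
  ∑ k ∈ Finset.Icc (max (2*i - (n:ℤ) + 1) (-1)) (i - 1), F n s e i k * G n s i k

/-!
For `2i ≥ n - 2` the sum defining `κ(i)` starts at `k = 2i - n + 1`, so the shift `k ↦ k + 2`
matches the terms of `κ(i + 1)` with all terms of `κ(i)` except the positive last one, `k = i - 1`.
Matched terms decrease: `F(i, k) = F(i + 1, k + 2) · (s^(n-i-2) t + 1)`, and peeling one factor off
each of the two Gaussian binomials in `G` gives `G(i + 1, k + 2) ≤ s · G(i, k)`.
-/

lemma prod_Icc_add_one_right {M : Type*} [CommMonoid M] (f : ℤ → M) {a b : ℤ} (h : a ≤ b + 1) :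
    ∏ v ∈ Icc a (b + 1), f v = (∏ v ∈ Icc a b, f v) * f (b + 1) := by
  rw [← insert_Icc_right_eq_Icc_add_one h, prod_insert (by simp), mul_comm]

lemma prod_Icc_one_add_one_left {M : Type*} [CommMonoid M] (f : ℤ → M) {c : ℤ} (h : 0 ≤ c) :
    ∏ v ∈ Icc 1 (c + 1), f v = f 1 * ∏ v ∈ Icc 1 c, f (v + 1) := by
  rw [← insert_Icc_add_one_left_eq_Icc (by omega), prod_insert (by simp), ← map_add_right_Icc,
    prod_map]
  rfl

noncomputable def qprod (q : ℝ) (a c : ℤ) : ℝ := ∏ v ∈ Icc 1 c, (q ^ (a + v) - 1)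

/-- For `0 ≤ a, b, c` this is `q^(b²) [b + c choose c]_q [a + b choose b]_q`, the shape of `G`. -/
noncomputable def gaussTerm (q : ℝ) (a b c : ℤ) : ℝ :=
  q ^ (b ^ 2) * (qprod q b c / qprod q 0 c) * (qprod q a b / qprod q 0 b)

lemma qprod_pos {q : ℝ} (hq : 1 < q) {a : ℤ} (ha : 0 ≤ a) (c : ℤ) : 0 < qprod q a c :=
  prod_pos fun v hv ↦ sub_pos.2 <| one_lt_zpow₀ hq <| by grind

lemma qprod_add_one_right (q : ℝ) (a : ℤ) {c : ℤ} (hc : 0 ≤ c) :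
    qprod q a (c + 1) = qprod q a c * (q ^ (a + c + 1) - 1) := by
  rw [qprod, prod_Icc_add_one_right _ (by omega), add_assoc]
  rfl

lemma qprod_add_one_left (q : ℝ) (a : ℤ) {c : ℤ} (hc : 0 ≤ c) :
    qprod q a (c + 1) = (q ^ (a + 1) - 1) * qprod q (a + 1) c := by
  rw [qprod, prod_Icc_one_add_one_left _ hc, qprod]
  congr 2 with v
  ring_nf

lemma gaussTerm_pos {q : ℝ} (hq : 1 < q) {a b : ℤ} (ha : 0 ≤ a) (hb : 0 ≤ b) (c : ℤ) :
    0 < gaussTerm q a b c := by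
  have := qprod_pos hq hb c
  have := qprod_pos hq ha b
  have := qprod_pos hq le_rfl c
  have := qprod_pos hq le_rfl b
  unfold gaussTerm
  positivity

lemma sub_one_mul_div_le_mul_div_sub_one {q x y z w : ℝ} (hq : 2 ≤ q) (hx : 1 < x) (hy : 2 ≤ y)
    (hz : 1 ≤ z) (hw : x ^ 2 ≤ w) :
    (x - 1) * (x * y - 1) / ((y - 1) * (q * y - 1)) ≤ w * (z * x - 1) / (x - 1) := by
  have hxy : (x - 1) * (x * y - 1) ≤ x ^ 2 * y := by nlinarith
  have hy' : y ≤ (y - 1) * (q * y - 1) := by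
    nlinarith [mul_nonneg (mul_nonneg (sub_nonneg.2 hq) (by linarith : (0:ℝ) ≤ y))
      (by linarith : 0 ≤ y - 1)]
  have hzx : x - 1 ≤ z * x - 1 := by nlinarith
  rw [div_le_div_iff₀ (by nlinarith) (by linarith)]
  calc (x - 1) * (x * y - 1) * (x - 1) ≤ x ^ 2 * y * (z * x - 1) := by gcongr
    _ ≤ w * ((y - 1) * (q * y - 1)) * (z * x - 1) := by gcongr <;> nlinarith
    _ = w * (z * x - 1) * ((y - 1) * (q * y - 1)) := by ring

lemma gaussTerm_add_two_le {q f : ℝ} (hq : 2 ≤ q) (hf : q ≤ f) {a b c : ℤ} (ha : 0 ≤ a)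
    (hb : 0 ≤ b) (hc : 0 ≤ c) :
    gaussTerm q a b (c + 2) ≤ f * gaussTerm q a (b + 1) c := by
  have hq0 : q ≠ 0 := by positivity
  have hq1 : 1 < q := by linarith
  have hx : 1 < q ^ (b + 1) := one_lt_zpow₀ hq1 (by omega)
  have hy : 2 ≤ q ^ (c + 1) :=
    hq.trans <| by simpa using zpow_le_zpow_right₀ hq1.le (show 1 ≤ c + 1 by omega)
  have hz : 1 ≤ q ^ a := one_le_zpow₀ hq1.le ha
  have hw : (q ^ (b + 1)) ^ 2 ≤ f * q ^ (2 * b + 1) := by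
    calc (q ^ (b + 1)) ^ 2 = q * q ^ (2 * b + 1) := by
          rw [← zpow_natCast, ← zpow_mul, mul_comm q, ← zpow_add_one₀ hq0]; ring_nf
      _ ≤ f * q ^ (2 * b + 1) := by gcongr
  unfold gaussTerm
  rw [show c + 2 = c + 1 + 1 by ring, qprod_add_one_left q b (by omega),
    qprod_add_one_right q (b + 1) hc, qprod_add_one_right q 0 (by omega),
    qprod_add_one_right q 0 hc, qprod_add_one_right q a hb, qprod_add_one_right q 0 hb,
    show b + 1 + c + 1 = (b + 1) + (c + 1) by ring, show 0 + (c + 1) + 1 = 1 + (c + 1) by ring,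
    show a + b + 1 = a + (b + 1) by ring, show (b + 1) ^ 2 = b ^ 2 + (2 * b + 1) by ring,
    zpow_add₀ hq0 (b + 1), zpow_add₀ hq0 1, zpow_add₀ hq0 a, zpow_add₀ hq0 (b ^ 2), zpow_one,
    zero_add, zero_add]
  have := qprod_pos hq1 (show 0 ≤ b + 1 by omega) c
  have := qprod_pos hq1 ha b
  have := qprod_pos hq1 le_rfl c
  have := qprod_pos hq1 le_rfl b
  generalize q ^ (b + 1) = x at *
  generalize q ^ (c + 1) = y at *
  set K := q ^ (b ^ 2) * (qprod q (b + 1) c / qprod q 0 c) * (qprod q a b / qprod q 0 b)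
  have hK : 0 ≤ K := by positivity
  have : x - 1 ≠ 0 := by linarith
  have : y - 1 ≠ 0 := by linarith
  have : q * y - 1 ≠ 0 := by nlinarith
  calc _ = K * ((x - 1) * (x * y - 1) / ((y - 1) * (q * y - 1))) := by simp only [K]; field_simp
    _ ≤ K * (f * q ^ (2 * b + 1) * (q ^ a * x - 1) / (x - 1)) :=
        mul_le_mul_of_nonneg_left (sub_one_mul_div_le_mul_div_sub_one hq hx hy hz hw) hK
    _ = _ := by simp only [K]; field_simp

lemma one_le_tval {s : ℕ} (hs : 1 ≤ s) (e : ℕ) : 1 ≤ tval s e :=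
  Real.one_le_rpow (by exact_mod_cast hs) (by positivity)

lemma F_pos (n s e : ℕ) (i k : ℤ) : 0 < F n s e i k :=
  prod_pos fun _ _ ↦ by unfold tval; positivity

lemma F_eq_mul_F_add_one (n s e : ℕ) {i k : ℤ} (hk : k ≤ i - 1) :
    F n s e i k = F n s e (i + 1) (k + 2) * ((s : ℝ) ^ ((n : ℤ) - i - 2) * tval s e + 1) := by
  unfold F
  rw [show (n : ℤ) - i - 2 = n - (i + 1) - 2 + 1 by ring, prod_Icc_add_one_right _ (by omega),
    show (n : ℤ) - 2 * (i + 1) + (k + 2) - 1 = n - 2 * i + k - 1 by ring]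

lemma G_eq_gaussTerm (n s : ℕ) (i k : ℤ) :
    G n s i k = gaussTerm s ((n : ℤ) - 2 * i + k - 1) (i - k) (k + 1) := by
  simp only [G, gaussTerm, qprod, prod_div_distrib, zero_add]

lemma G_add_one_add_two_le {n s : ℕ} (hs : 2 ≤ s) {f : ℝ} (hf : (s : ℝ) ≤ f) {i k : ℤ}
    (hk : 2 * i - n + 1 ≤ k) (hki : k ≤ i - 1) (hk1 : -1 ≤ k) :
    G n s (i + 1) (k + 2) ≤ f * G n s i k := by
  have h := gaussTerm_add_two_le (q := s) (by exact_mod_cast hs) hf (a := n - 2 * i + k - 1)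
    (b := i - k - 1) (c := k + 1) (by omega) (by omega) (by omega)
  rw [G_eq_gaussTerm, G_eq_gaussTerm]
  convert h using 2 <;> ring_nf

lemma term_add_one_add_two_le {n s : ℕ} (e : ℕ) (hs : 2 ≤ s) {i k : ℤ} (hk : 2 * i - n + 1 ≤ k)
    (hki : k ≤ i - 2) (hk1 : -1 ≤ k) :
    F n s e (i + 1) (k + 2) * G n s (i + 1) (k + 2) ≤ F n s e i k * G n s i k := by
  have hs1 : (1 : ℝ) ≤ s := by exact_mod_cast (by omega : 1 ≤ s)
  have hf : (s : ℝ) ≤ (s : ℝ) ^ ((n : ℤ) - i - 2) * tval s e + 1 := by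
    have : (s : ℝ) ≤ (s : ℝ) ^ ((n : ℤ) - i - 2) := by
      simpa using zpow_le_zpow_right₀ hs1 (show 1 ≤ (n : ℤ) - i - 2 by omega)
    nlinarith [one_le_tval (show 1 ≤ s by omega) e]
  rw [F_eq_mul_F_add_one n s e (by omega : k ≤ i - 1), mul_assoc]
  exact mul_le_mul_of_nonneg_left (G_add_one_add_two_le hs hf hk (by omega) hk1) (F_pos ..).le

lemma kappa_add_one_lt {n s : ℕ} (e : ℕ) (hs : 2 ≤ s) {i : ℤ} (hi : (n : ℤ) - 2 ≤ 2 * i)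
    (hin : i ≤ (n : ℤ) - 2) :
    kappa n s e (i + 1) < kappa n s e i := by
  unfold kappa
  have hshift : Icc (2 * (i + 1) - n + 1) (i + 1 - 1) =
      (Icc (2 * i - n + 1) (i - 2)).map (addRightEmbedding 2) := by
    rw [map_add_right_Icc]; congr 1 <;> ring
  have hlast : Icc (2 * i - n + 1) (i - 1) = insert (i - 1) (Icc (2 * i - n + 1) (i - 2)) := by
    rw [show i - 1 = i - 2 + 1 by ring, insert_Icc_right_eq_Icc_add_one (by omega)]
  rw [max_eq_left (by omega), max_eq_left (by omega), hshift, sum_map, hlast,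
    sum_insert (by simp only [mem_Icc]; omega)]
  simp only [addRightEmbedding_apply]
  have hmatched : ∑ k ∈ Icc (2 * i - n + 1) (i - 2), F n s e (i + 1) (k + 2) * G n s (i + 1) (k + 2)
      ≤ ∑ k ∈ Icc (2 * i - n + 1) (i - 2), F n s e i k * G n s i k :=
    sum_le_sum fun k hk ↦ by
      rw [mem_Icc] at hk
      exact term_add_one_add_two_le e hs hk.1 hk.2 (by omega)
  have hlast_pos : 0 < F n s e i (i - 1) * G n s i (i - 1) := by
    rw [G_eq_gaussTerm]
    exact mul_pos (F_pos ..) (gaussTerm_pos (by exact_mod_cast hs) (by omega) (by omega) _)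
  linarith

theorem stmt_11_general (n s e : ℕ) (hs : 2 ≤ s)
    (i j : ℤ) (hi : ((n:ℝ) - 2) / 2 ≤ (i:ℝ)) (hij : i < j) (hj : j ≤ (n:ℤ) - 1) :
    kappa n s e i > kappa n s e j := by
  have hi' : (n : ℤ) - 2 ≤ 2 * i := by
    have : ((n : ℤ) : ℝ) - 2 ≤ 2 * i := by push_cast; linarith
    exact_mod_cast this
  refine strictAntiOn_of_succ_lt Set.ordConnected_Icc (fun a _ ha hsa ↦ ?_)
    (Set.left_mem_Icc.2 (by omega)) ⟨hij.le, hj⟩ hij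
  rw [Order.succ_eq_add_one] at hsa ⊢
  exact kappa_add_one_lt e hs (by linarith [ha.1]) (by linarith [hsa.2])

theorem stmt_11 (n s e : ℕ) (hn : 3 ≤ n) (hs : 2 ≤ s) (he : e ≤ 4)
    (i j : ℤ) (hi : ((n:ℝ) - 2) / 2 ≤ (i:ℝ)) (hij : i < j) (hj : j ≤ (n:ℤ) - 1) :
    kappa n s e i > kappa n s e j :=
  stmt_11_general n s e hs i j hi hij hj
end
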